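/- Fix d ≥ 2, n ≥ 1, r ≥ 1 and a prime p with p ∤ disc_c(G_{d,n}(c)). Suppose there exists c₀ ∈ ℤ such that p is a primitive prime divisor of f_{c₀}^n(0), where f_c(x) = x^d + c. Then there exists c_r ∈ ℤ such that p is a primitive prime divisor of f_{c_r}^n(0) and ν_p(f_{c_r}^n(0)) = r exactly. -/

import Mathlib

/-- The discriminant of an integer polynomial, computed as a complex number from
its complex roots: `lc ^ (2 deg - 2) * ∏_{i < j} (rᵢ - rⱼ)²`. -/
noncomputable def discC (G : Polynomial ℤ) : ℂ :=
  let L := ((G.map (Int.castRingHom ℂ)).roots).toList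
  ((G.leadingCoeff : ℤ) : ℂ) ^ (2 * G.natDegree - 2) *
    ∏ i ∈ Finset.range L.length, ∏ j ∈ Finset.Ioo i L.length,
      (L.getD i 0 - L.getD j 0) ^ 2

open Polynomial

lemma aux_monic (d : ℕ) (hd : 2 ≤ d) (P : ℕ → Polynomial ℤ) (hP0 : P 0 = 0)
    (hPs : ∀ k, P (k + 1) = (P k) ^ d + Polynomial.X) :
    ∀ t, 1 ≤ t → (P t).Monic ∧ 1 ≤ (P t).natDegree := by
  intro t ht
  induction t with
  | zero => omega
  | succ k ih =>
    rcases Nat.eq_or_lt_of_le ht with h | h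
    · have : k = 0 := by omega
      subst this
      rw [hPs, hP0, zero_pow (by omega : d ≠ 0), zero_add]
      exact ⟨monic_X, by simp⟩
    · have hk : 1 ≤ k := by omega
      obtain ⟨hm, hdeg⟩ := ih hk
      have hmd : ((P k) ^ d).Monic := hm.pow d
      have hdegpow : ((P k) ^ d).natDegree = d * (P k).natDegree := hm.natDegree_pow d
      have h2 : 2 ≤ ((P k) ^ d).natDegree := by nlinarith
      have hXdeg : (Polynomial.X : Polynomial ℤ).degree < ((P k) ^ d).degree := by
        rw [degree_X, degree_eq_natDegree hmd.ne_zero]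
        exact_mod_cast by exact_mod_cast h2.trans_lt' (by norm_num)
      rw [hPs]
      refine ⟨hmd.add_of_left hXdeg, ?_⟩
      have hdeq : ((P k) ^ d + Polynomial.X).degree = ((P k)^d).degree :=
        degree_add_eq_left_of_degree_lt hXdeg
      have := natDegree_eq_of_degree_eq hdeq
      omega

lemma aux_factor (d n p : ℕ) (hd : 2 ≤ d) (hn : 1 ≤ n) (hp : p.Prime)
    (P : ℕ → Polynomial ℤ) (hP0 : P 0 = 0)
    (hPs : ∀ k, P (k + 1) = (P k) ^ d + Polynomial.X)
    (hmon : ∀ t, 1 ≤ t → (P t).Monic)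
    (G : Polynomial ℤ)
    (hG : algebraMap (Polynomial ℤ) (FractionRing (Polynomial ℤ)) G =
      ∏ t ∈ n.divisors,
        (algebraMap (Polynomial ℤ) (FractionRing (Polynomial ℤ)) (P t)) ^
          (ArithmeticFunction.moebius (n / t))) :
    ∃ A B : Polynomial ℤ, G * A = P n * B ∧ G.Monic ∧
      ∀ c : ℤ, (∀ j, 1 ≤ j → j < n → ¬ (p : ℤ) ∣ (P j).eval c) →
        ¬ (p : ℤ) ∣ A.eval c ∧ ¬ (p : ℤ) ∣ B.eval c := by
  classical
  set K := FractionRing (Polynomial ℤ)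
  set φ := algebraMap (Polynomial ℤ) K with hφ
  have hinj : Function.Injective φ := IsFractionRing.injective _ _
  have hn0 : n ≠ 0 := by omega
  have hpZ : Prime (p : ℤ) := Nat.prime_iff_prime_int.mp hp
  have hdivmem : ∀ t ∈ n.divisors, 1 ≤ t ∧ t ≤ n := by
    intro t ht
    rw [Nat.mem_divisors] at ht
    have ht0 : t ≠ 0 := by rintro rfl; exact hn0 (Nat.eq_zero_of_zero_dvd ht.1)
    exact ⟨Nat.pos_of_ne_zero ht0, Nat.le_of_dvd (by omega) ht.1⟩
  have hPne : ∀ t ∈ n.divisors, φ (P t) ≠ 0 := by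
    intro t ht
    have := (hmon t (hdivmem t ht).1).ne_zero
    intro h
    exact this (hinj (by simpa using h))
  set m : ℕ → ℕ := fun t => (ArithmeticFunction.moebius (n / t)).toNat with hm
  set k : ℕ → ℕ := fun t => (-(ArithmeticFunction.moebius (n / t))).toNat with hk
  set A : Polynomial ℤ := ∏ t ∈ n.divisors, (P t) ^ (k t) with hA
  set B₁ : Polynomial ℤ := ∏ t ∈ n.divisors.erase n, (P t) ^ (m t) with hB₁
  set B : Polynomial ℤ := ∏ t ∈ n.divisors, (P t) ^ (m t) with hB
  have key : φ G * φ A = φ B := by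
    rw [hG, hA, hB, map_prod, map_prod, ← Finset.prod_mul_distrib]
    apply Finset.prod_congr rfl
    intro t ht
    have hz : (ArithmeticFunction.moebius (n / t) : ℤ) = (m t : ℤ) - (k t : ℤ) := by
      simp only [hm, hk]; omega
    rw [map_pow, map_pow, hz, zpow_sub₀ (hPne t ht), zpow_natCast, zpow_natCast,
      div_mul_cancel₀ _ (pow_ne_zero _ (hPne t ht))]
  have hGA : G * A = B := by
    apply hinj; rw [map_mul]; exact key
  have hmn : m n = 1 := by
    simp only [hm, Nat.div_self (by omega : 0 < n)]
    simp [ArithmeticFunction.moebius_apply_one]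
  have hBsplit : B = P n * B₁ := by
    rw [hB, hB₁, ← Finset.mul_prod_erase _ _ (Nat.mem_divisors_self n hn0), hmn, pow_one]
  -- eval claims
  have hevalA : ∀ c : ℤ, (∀ j, 1 ≤ j → j < n → ¬ (p : ℤ) ∣ (P j).eval c) →
      ¬ (p : ℤ) ∣ A.eval c := by
    intro c hc hdvd
    rw [hA, eval_prod] at hdvd
    rw [Prime.dvd_finset_prod_iff hpZ] at hdvd
    obtain ⟨t, ht, hdvd⟩ := hdvd
    rw [eval_pow] at hdvd
    by_cases htn : t = n
    · have : k n = 0 := by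
        simp only [hk, Nat.div_self (by omega : 0 < n)]
        simp [ArithmeticFunction.moebius_apply_one]
      rw [htn, this, pow_zero] at hdvd
      exact hpZ.not_dvd_one hdvd
    · have h1 := (hdivmem t ht).1
      have h2 : t < n := lt_of_le_of_ne (hdivmem t ht).2 htn
      exact hc t h1 h2 (hpZ.dvd_of_dvd_pow hdvd)
  have hevalB : ∀ c : ℤ, (∀ j, 1 ≤ j → j < n → ¬ (p : ℤ) ∣ (P j).eval c) →
      ¬ (p : ℤ) ∣ B₁.eval c := by
    intro c hc hdvd
    rw [hB₁, eval_prod, Prime.dvd_finset_prod_iff hpZ] at hdvd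
    obtain ⟨t, ht, hdvd⟩ := hdvd
    have htmem := Finset.mem_of_mem_erase ht
    have htn : t ≠ n := Finset.ne_of_mem_erase ht
    have h1 := (hdivmem t htmem).1
    have h2 : t < n := lt_of_le_of_ne (hdivmem t htmem).2 htn
    rw [eval_pow] at hdvd
    exact hc t h1 h2 (hpZ.dvd_of_dvd_pow hdvd)
  -- monicity of G
  have hAmon : A.Monic := monic_prod_of_monic _ _ (fun t ht => (hmon t (hdivmem t ht).1).pow _)
  have hBmon : B.Monic := monic_prod_of_monic _ _ (fun t ht => (hmon t (hdivmem t ht).1).pow _)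
  have hGmon : G.Monic := by
    have h1 : G.leadingCoeff * A.leadingCoeff = B.leadingCoeff := by
      rw [← leadingCoeff_mul, hGA]
    rw [hAmon.leadingCoeff, hBmon.leadingCoeff, mul_one] at h1
    exact h1
  exact ⟨A, B₁, by rw [hGA, hBsplit], hGmon, fun c hc => ⟨hevalA c hc, hevalB c hc⟩⟩

lemma aux_coprime (p : ℕ) (hp : p.Prime) (x : ℤ) (h : ¬ (p:ℤ) ∣ x) : IsCoprime (p:ℤ) x := by
  rw [Int.isCoprime_iff_gcd_eq_one]
  have h' : ¬ p ∣ x.natAbs := by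
    intro hd; exact h (Int.natCast_dvd.mpr hd)
  have := (Nat.Prime.coprime_iff_not_dvd hp).mpr h'
  simpa [Int.gcd] using this

lemma aux_lincong (p : ℕ) (hp : p.Prime) (a b : ℤ) (h : ¬ (p:ℤ) ∣ a) :
    ∃ t : ℤ, (p:ℤ) ∣ (a * t - b) := by
  obtain ⟨u, v, huv⟩ := aux_coprime p hp a h
  refine ⟨v * b, ⟨-(u * b), ?_⟩⟩
  have : v * a = 1 - u * p := by linarith
  calc a * (v * b) - b = (v * a) * b - b := by ring
    _ = (1 - u * p) * b - b := by rw [this]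
    _ = (p:ℤ) * (-(u * b)) := by ring

lemma aux_hensel (p : ℕ) (hp : p.Prime) (G : Polynomial ℤ) (c₀ : ℤ) (r : ℕ) (hr : 1 ≤ r)
    (h0 : (p:ℤ) ∣ G.eval c₀) (h1 : ¬ (p:ℤ) ∣ (Polynomial.derivative G).eval c₀) :
    ∃ c : ℤ, (p:ℤ) ∣ (c - c₀) ∧ (p:ℤ)^r ∣ G.eval c ∧ ¬ (p:ℤ)^(r+1) ∣ G.eval c := by
  have hpZ : Prime (p : ℤ) := Nat.prime_iff_prime_int.mp hp
  have hp0 : (p:ℤ) ≠ 0 := by exact_mod_cast hp.ne_zero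
  -- derivative stays a unit mod p near c₀
  have hder : ∀ c : ℤ, (p:ℤ) ∣ (c - c₀) → ¬ (p:ℤ) ∣ (Polynomial.derivative G).eval c := by
    intro c hc hdvd
    apply h1
    have hsub : (p:ℤ) ∣ ((Polynomial.derivative G).eval c - (Polynomial.derivative G).eval c₀) :=
      hc.trans (Polynomial.sub_dvd_eval_sub c c₀ _)
    have := dvd_sub hdvd hsub
    simpa using this
  -- induction: for every j ≥ 1 there is c ≡ c₀ with p^j ∣ G(c)
  have main : ∀ j : ℕ, 1 ≤ j → ∃ c : ℤ, (p:ℤ) ∣ (c - c₀) ∧ (p:ℤ)^j ∣ G.eval c := by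
    intro j hj
    induction j with
    | zero => omega
    | succ i ih =>
      by_cases hi : 1 ≤ i
      · obtain ⟨c, hc, hdvd⟩ := ih hi
        obtain ⟨w, hw⟩ := hdvd
        obtain ⟨t, ht⟩ := aux_lincong p hp ((Polynomial.derivative G).eval c) (-w) (hder c hc)
        obtain ⟨K, hK⟩ := Polynomial.binomExpansion G c (t * (p:ℤ)^i)
        refine ⟨c + t * (p:ℤ)^i, ?_, ?_⟩
        · have : (p:ℤ) ∣ (p:ℤ)^i := dvd_pow_self _ (by omega)
          have h2 : c + t * (p:ℤ)^i - c₀ = (c - c₀) + t * (p:ℤ)^i := by ring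
          rw [h2]
          exact dvd_add hc (Dvd.dvd.mul_left this t)
        · rw [hK, hw]
          obtain ⟨s, hs⟩ := ht
          have hexp : (p:ℤ)^i * w + (Polynomial.derivative G).eval c * (t * (p:ℤ)^i) +
              K * (t * (p:ℤ)^i)^2
              = (p:ℤ)^(i+1) * (s + K * t^2 * (p:ℤ)^(2*i - (i+1)) * (p:ℤ)^0) := by
            have h2i : 2*i - (i+1) + (i+1) = 2*i := by omega
            have : ((Polynomial.derivative G).eval c) * t = -w + (p:ℤ) * s := by linarith
            have hpow : (p:ℤ)^(2*i - (i+1)) * (p:ℤ)^(i+1) = ((p:ℤ)^i)^2 := by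
              rw [← pow_add, h2i, ← pow_mul]; ring_nf
            calc (p:ℤ)^i * w + (Polynomial.derivative G).eval c * (t * (p:ℤ)^i) +
                K * (t * (p:ℤ)^i)^2
                = (p:ℤ)^i * w + ((Polynomial.derivative G).eval c * t) * (p:ℤ)^i +
                  K * t^2 * ((p:ℤ)^i)^2 := by ring
              _ = (p:ℤ)^i * w + (-w + (p:ℤ) * s) * (p:ℤ)^i +
                  K * t^2 * ((p:ℤ)^(2*i - (i+1)) * (p:ℤ)^(i+1)) := by rw [this, hpow]
              _ = (p:ℤ)^(i+1) * (s + K * t^2 * (p:ℤ)^(2*i - (i+1)) * (p:ℤ)^0) := by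
                  rw [pow_succ]; ring
          exact ⟨_, hexp⟩
      · have : i = 0 := by omega
        subst this
        exact ⟨c₀, by simp, by simpa using h0⟩
  obtain ⟨c, hc, hdvd⟩ := main r hr
  obtain ⟨w, hw⟩ := hdvd
  obtain ⟨t, ht⟩ := aux_lincong p hp ((Polynomial.derivative G).eval c) (1 - w) (hder c hc)
  obtain ⟨K, hK⟩ := Polynomial.binomExpansion G c (t * (p:ℤ)^r)
  obtain ⟨s, hs⟩ := ht
  refine ⟨c + t * (p:ℤ)^r, ?_, ?_, ?_⟩
  · have h1' : (p:ℤ) ∣ (p:ℤ)^r := dvd_pow_self _ (by omega)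
    have h2 : c + t * (p:ℤ)^r - c₀ = (c - c₀) + t * (p:ℤ)^r := by ring
    rw [h2]; exact dvd_add hc (Dvd.dvd.mul_left h1' t)
  all_goals {
    have hu : (Polynomial.derivative G).eval c * t = (1 - w) + (p:ℤ) * s := by linarith
    have heq : G.eval (c + t * (p:ℤ)^r) = (p:ℤ)^r * (1 + (p:ℤ) * (s + K * t^2 * (p:ℤ)^(2*r - (r+1)))) := by
      rw [hK, hw]
      have h2r : (2*r - (r+1)) + (r + 1) = 2 * r := by omega
      have hpow : (p:ℤ)^(2*r - (r+1)) * (p:ℤ)^(r+1) = ((p:ℤ)^r)^2 := by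
        rw [← pow_add, h2r, ← pow_mul]; ring_nf
      calc (p:ℤ)^r * w + (Polynomial.derivative G).eval c * (t * (p:ℤ)^r) + K * (t * (p:ℤ)^r)^2
          = (p:ℤ)^r * w + ((Polynomial.derivative G).eval c * t) * (p:ℤ)^r +
            K * t^2 * ((p:ℤ)^r)^2 := by ring
        _ = (p:ℤ)^r * w + ((1 - w) + (p:ℤ) * s) * (p:ℤ)^r +
            K * t^2 * ((p:ℤ)^(2*r - (r+1)) * (p:ℤ)^(r+1)) := by rw [hu, hpow]
        _ = (p:ℤ)^r * (1 + (p:ℤ) * (s + K * t^2 * (p:ℤ)^(2*r - (r+1)))) := by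
            rw [pow_succ]; ring
    rw [heq]
    first
      | exact Dvd.intro _ rfl
      | {
          intro hcon
          rw [pow_succ, mul_dvd_mul_iff_left (pow_ne_zero r hp0)] at hcon
          have h1d : (p:ℤ) ∣ (p:ℤ) * (s + K * t^2 * (p:ℤ)^(2*r - (r+1))) := Dvd.intro _ rfl
          have := dvd_sub hcon h1d
          simp only [add_sub_cancel_right] at this
          exact hpZ.not_dvd_one this
        }
  }

lemma aux_pair {α : Type*} [DecidableEq α] (l : List α) (a : α) (h : 2 ≤ l.count a) :
    ∃ i j : Fin l.length, (i:ℕ) < (j:ℕ) ∧ l.get i = a ∧ l.get j = a := by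
  have hdup : List.Duplicate a l := List.duplicate_iff_two_le_count.mpr h
  have hsub : [a, a].Sublist l := List.duplicate_iff_sublist.mp hdup
  obtain ⟨f, hf⟩ := List.sublist_iff_exists_fin_orderEmbedding_get_eq.mp hsub
  refine ⟨f ⟨0, by norm_num⟩, f ⟨1, by norm_num⟩, ?_, ?_, ?_⟩
  · exact f.strictMono (by norm_num)
  · have := hf ⟨0, by norm_num⟩; simpa using this.symm
  · have := hf ⟨1, by norm_num⟩; simpa using this.symm

lemma aux_p_not_unit (p : ℕ) (hp : p.Prime) :
    ¬ IsUnit (algebraMap ℤ (integralClosure ℤ ℂ) p) := by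
  intro h
  obtain ⟨u, hu⟩ := h.exists_right_inv
  -- coe to ℂ
  have hu' : (p : ℂ) * (u : ℂ) = 1 := by
    have := congrArg (fun x : integralClosure ℤ ℂ => (x : ℂ)) hu
    push_cast at this
    simpa using this
  have hp0 : (p : ℂ) ≠ 0 := by
    exact_mod_cast (Nat.cast_ne_zero (R := ℂ)).mpr hp.ne_zero
  have huval : (u : ℂ) = ((algebraMap ℚ ℂ) (1 / (p:ℚ))) := by
    rw [map_div₀, map_one, map_natCast, eq_div_iff hp0]
    linear_combination hu'
  have hint : IsIntegral ℤ ((algebraMap ℚ ℂ) (1 / (p:ℚ))) := huval ▸ u.2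
  have hint' : IsIntegral ℤ (1 / (p:ℚ)) := by
    have := (isIntegral_algHom_iff ((algebraMap ℚ ℂ).toIntAlgHom)
      (algebraMap ℚ ℂ).injective (x := 1 / (p:ℚ)))
    exact this.mp hint
  obtain ⟨y, hy⟩ := IsIntegrallyClosed.isIntegral_iff.mp hint'
  have hpq : (p:ℚ) ≠ 0 := by exact_mod_cast hp.ne_zero
  have : (p:ℚ) * (y:ℚ) = 1 := by
    rw [show ((algebraMap ℤ ℚ) y : ℚ) = (y:ℚ) from rfl] at hy
    field_simp at hy
    linarith [hy]
  have : (p:ℤ) * y = 1 := by exact_mod_cast this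
  exact hp.one_lt.ne' (by
    have h1 := Int.eq_one_of_mul_eq_one_right (by positivity) this
    exact_mod_cast h1)

set_option maxHeartbeats 4000000 in
set_option synthInstance.maxHeartbeats 2000000 in
lemma aux_disc (p : ℕ) (hp : p.Prime) (G : Polynomial ℤ) (hmon : G.Monic) (c₀ : ℤ)
    (h0 : (p:ℤ) ∣ G.eval c₀) (h1 : (p:ℤ) ∣ (Polynomial.derivative G).eval c₀)
    (D : ℤ) (hD : (D : ℂ) = discC G) : (p:ℤ) ∣ D := by
  classical
  set R := integralClosure ℤ ℂ with hR
  -- maximal ideal containing p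
  have hne : Ideal.span {(algebraMap ℤ R) p} ≠ ⊤ := by
    simp only [ne_eq, Ideal.span_singleton_eq_top]
    exact aux_p_not_unit p hp
  obtain ⟨𝔪, h𝔪max, h𝔪le⟩ := Ideal.exists_le_maximal _ hne
  haveI : 𝔪.IsPrime := h𝔪max.isPrime
  letI : CommRing (R ⧸ 𝔪) := Ideal.Quotient.commRing 𝔪
  letI : Ring (R ⧸ 𝔪) := (Ideal.Quotient.commRing 𝔪).toRing
  letI : Nontrivial (R ⧸ 𝔪) := Ideal.Quotient.nontrivial_iff.mpr h𝔪max.ne_top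
  letI : IsDomain (R ⧸ 𝔪) := Ideal.Quotient.isDomain 𝔪
  set φ : R →+* R ⧸ 𝔪 := Ideal.Quotient.mk 𝔪 with hφ
  set χ : ℤ →+* R ⧸ 𝔪 := φ.comp (algebraMap ℤ R) with hχ
  have hχp : χ p = 0 := by
    have hm : (algebraMap ℤ R) p ∈ 𝔪 := h𝔪le (Ideal.subset_span rfl)
    show φ ((algebraMap ℤ R) p) = 0
    exact Ideal.Quotient.eq_zero_iff_mem.mpr hm
  -- roots
  set M := ((G.map (Int.castRingHom ℂ)).roots) with hM
  set L := M.toList with hL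
  have hGmC : (G.map (Int.castRingHom ℂ)).Monic := hmon.map _
  have hsplit : G.map (Int.castRingHom ℂ)
      = (M.map (fun a => X - C a)).prod :=
    (IsAlgClosed.splits _).eq_prod_roots_of_monic hGmC
  have hint : ∀ z ∈ M, IsIntegral ℤ z := by
    intro z hz
    refine ⟨G, hmon, ?_⟩
    have hroot : (G.map (Int.castRingHom ℂ)).IsRoot z :=
      isRoot_of_mem_roots hz
    rw [Polynomial.eval₂_eq_eval_map]
    have : algebraMap ℤ ℂ = Int.castRingHom ℂ := Subsingleton.elim _ _
    rw [this]
    exact hroot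
  -- lift function
  set lift : ℂ → R := fun z => if h : IsIntegral ℤ z then ⟨z, (mem_integralClosure_iff ℤ ℂ).mpr h⟩ else 0 with hlift
  have hliftval : ∀ z : ℂ, IsIntegral ℤ z → ((lift z : R) : ℂ) = z := by
    intro z hz; simp [hlift, hz]
  set ψ : ℂ → (R ⧸ 𝔪) := fun z => φ (lift z) with hψ
  -- factorization over R
  set ι : _ →+* ℂ := R.val.toRingHom with hι
  have hιval : ∀ x : R, ι x = (x : ℂ) := fun x => rfl
  have hfacR : G.map (algebraMap ℤ R) = (M.map (fun z => X - C (lift z))).prod := by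
    apply Polynomial.map_injective ι Subtype.coe_injective
    rw [Polynomial.map_map, Polynomial.map_multiset_prod]
    have h2 : ι.comp (algebraMap ℤ R) = Int.castRingHom ℂ := Subsingleton.elim _ _
    rw [h2, hsplit]
    rw [Multiset.map_map]
    congr 1
    apply Multiset.map_congr rfl
    intro z hz
    show X - C z = Polynomial.map ι (X - C (lift z))
    rw [Polynomial.map_sub, Polynomial.map_X, Polynomial.map_C]
    exact congrArg (fun w => (X : Polynomial ℂ) - C w) (hliftval z (hint z hz)).symm
  -- factorization over the residue field
  have hfacK : G.map χ = ((M.map ψ).map (fun a => X - C a)).prod := by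
    have hmm : G.map χ = (G.map (algebraMap ℤ R)).map φ := by
      rw [Polynomial.map_map]
    rw [hmm, hfacR, Polynomial.map_multiset_prod, Multiset.map_map, Multiset.map_map]
    congr 1
    apply Multiset.map_congr rfl
    intro z hz
    show Polynomial.map φ (X - C (lift z)) = X - C (ψ z)
    rw [Polynomial.map_sub, Polynomial.map_X, Polynomial.map_C]
  have hGk0 : G.map χ ≠ 0 := (hmon.map χ).ne_zero
  have hroots : (G.map χ).roots = M.map ψ := by
    rw [hfacK, roots_multiset_prod_X_sub_C]
  -- χ c₀ is a double root of G.map χ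
  have hev0 : (G.map χ).eval (χ c₀) = 0 := by
    rw [Polynomial.eval_map, Polynomial.eval₂_at_apply]
    obtain ⟨w, hw⟩ := h0
    rw [hw, map_mul, hχp, zero_mul]
  have hev1 : ((Polynomial.derivative (G.map χ)).eval (χ c₀)) = 0 := by
    rw [Polynomial.derivative_map, Polynomial.eval_map, Polynomial.eval₂_at_apply]
    obtain ⟨w, hw⟩ := h1
    rw [hw, map_mul, hχp, zero_mul]
  have hdvd2 : (X - C (χ c₀))^2 ∣ G.map χ := by
    obtain ⟨Q, hQ⟩ := dvd_iff_isRoot.mpr hev0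
    have hQ' : Q.eval (χ c₀) = 0 := by
      have hder : Polynomial.derivative (G.map χ)
          = Q + (X - C (χ c₀)) * Polynomial.derivative Q := by
        rw [hQ, derivative_mul, derivative_X_sub_C]; ring
      rw [hder] at hev1
      simpa using hev1
    obtain ⟨Q1, hQ1⟩ := dvd_iff_isRoot.mpr hQ'
    exact ⟨Q1, by rw [hQ, hQ1]; ring⟩
  have hcount : 2 ≤ Multiset.count (χ c₀) (M.map ψ) := by
    rw [← hroots, Polynomial.count_roots]
    exact (Polynomial.le_rootMultiplicity_iff hGk0).mpr hdvd2
  have hMcoe : M = (L : Multiset ℂ) := (Multiset.coe_toList M).symm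
  have hlistcount : 2 ≤ (L.map ψ).count (χ c₀) := by
    have : M.map ψ = ((L.map ψ : List _) : Multiset _) := by
      rw [hMcoe]; rfl
    rw [this, Multiset.coe_count] at hcount
    exact hcount
  obtain ⟨fi, fj, hij, hgeti, hgetj⟩ := aux_pair (L.map ψ) (χ c₀) hlistcount
  have hlen : (L.map ψ).length = L.length := List.length_map _
  set i : ℕ := (fi : ℕ) with hi
  set j : ℕ := (fj : ℕ) with hj
  have hiL : i < L.length := by rw [← hlen]; exact fi.2
  have hjL : j < L.length := by rw [← hlen]; exact fj.2
  have hψi : ψ (L.getD i 0) = χ c₀ := by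
    rw [List.getD_eq_getElem L 0 hiL]
    convert hgeti using 1; simp [hi]
  have hψj : ψ (L.getD j 0) = χ c₀ := by
    rw [List.getD_eq_getElem L 0 hjL]
    convert hgetj using 1; simp [hj]
  -- the product over R
  have hgetint : ∀ m : ℕ, IsIntegral ℤ (L.getD m 0) := by
    intro m
    by_cases hm : m < L.length
    · rw [List.getD_eq_getElem L 0 hm]
      apply hint
      rw [hMcoe]
      exact Multiset.mem_coe.mpr (List.getElem_mem hm)
    · rw [List.getD_eq_default L 0 (by omega)]
      exact isIntegral_zero
  set Pi : R := ∏ a ∈ Finset.range L.length, ∏ b ∈ Finset.Ioo a L.length,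
      (lift (L.getD a 0) - lift (L.getD b 0))^2 with hPi
  have hPicoe : ι Pi = ∏ a ∈ Finset.range L.length, ∏ b ∈ Finset.Ioo a L.length,
      ((L.getD a 0) - (L.getD b 0))^2 := by
    rw [hPi, map_prod]
    apply Finset.prod_congr rfl
    intro a _
    rw [map_prod]
    apply Finset.prod_congr rfl
    intro b _
    rw [map_pow, map_sub, hιval, hιval, hliftval _ (hgetint a), hliftval _ (hgetint b)]
  have hDisc : (D : ℂ) = ι Pi := by
    rw [hD, hPicoe]
    show (((G.leadingCoeff : ℤ) : ℂ) ^ (2 * G.natDegree - 2) * _ : ℂ) = _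
    rw [hmon.leadingCoeff]
    push_cast
    rw [one_pow, one_mul]
  have hDPi : algebraMap ℤ R D = Pi := by
    apply Subtype.coe_injective
    have h3 : ι.comp (algebraMap ℤ R) = Int.castRingHom ℂ := Subsingleton.elim _ _
    have h4 : ι (algebraMap ℤ R D) = (D : ℂ) := by
      rw [← RingHom.comp_apply, h3]; simp
    calc ((algebraMap ℤ R D : R) : ℂ) = ι (algebraMap ℤ R D) := rfl
      _ = (D : ℂ) := h4
      _ = ι Pi := hDisc
      _ = (Pi : ℂ) := rfl
  have hχD : χ D = 0 := by
    have h5 : χ D = φ (algebraMap ℤ R D) := rfl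
    rw [h5, hDPi, hPi, map_prod φ]
    apply Finset.prod_eq_zero (Finset.mem_range.mpr hiL)
    rw [map_prod φ]
    apply Finset.prod_eq_zero (Finset.mem_Ioo.mpr ⟨hij, hjL⟩)
    rw [map_pow, map_sub]
    have : φ (lift (L.getD i 0)) = ψ (L.getD i 0) := rfl
    rw [this, hψi]
    have : φ (lift (L.getD j 0)) = ψ (L.getD j 0) := rfl
    rw [this, hψj]
    rw [sub_self]
    exact zero_pow (by norm_num)
  -- conclude
  have hpZ : Prime (p : ℤ) := Nat.prime_iff_prime_int.mp hp
  have hkerp : (p : ℤ) ∈ RingHom.ker χ := by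
    rw [RingHom.mem_ker]; exact hχp
  have hkerD : D ∈ RingHom.ker χ := by
    rw [RingHom.mem_ker]; exact hχD
  have hkerne : RingHom.ker χ ≠ ⊤ := by
    intro htop
    have : (1 : ℤ) ∈ RingHom.ker χ := htop ▸ Submodule.mem_top
    rw [RingHom.mem_ker, map_one] at this
    exact one_ne_zero this
  have hspanle : Ideal.span {(p : ℤ)} ≤ RingHom.ker χ := by
    rw [Ideal.span_le]
    intro x hx
    rw [Set.mem_singleton_iff] at hx
    subst hx
    exact hkerp
  have hmax : (Ideal.span {(p : ℤ)}).IsMaximal :=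
    PrincipalIdealRing.isMaximal_of_irreducible hpZ.irreducible
  have : Ideal.span {(p : ℤ)} = RingHom.ker χ := hmax.eq_of_le hkerne hspanle
  rw [← Ideal.mem_span_singleton, this]
  exact hkerD

theorem stmt12 (d n r p : ℕ) (hd : 2 ≤ d) (hn : 1 ≤ n) (hr : 1 ≤ r)
    (hp : p.Prime) (P : ℕ → Polynomial ℤ) (hP0 : P 0 = 0)
    (hPs : ∀ k, P (k + 1) = (P k) ^ d + Polynomial.X)
    (G : Polynomial ℤ)
    (hG : algebraMap (Polynomial ℤ) (FractionRing (Polynomial ℤ)) G =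
      ∏ t ∈ n.divisors,
        (algebraMap (Polynomial ℤ) (FractionRing (Polynomial ℤ)) (P t)) ^
          (ArithmeticFunction.moebius (n / t)))
    (hdisc : ∃ D : ℤ, (D : ℂ) = discC G ∧ ¬ (p : ℤ) ∣ D)
    (hex : ∃ c₀ : ℤ, (p : ℤ) ∣ (P n).eval c₀ ∧
      ∀ k, 1 ≤ k → k < n → ¬ (p : ℤ) ∣ (P k).eval c₀) :
    ∃ cr : ℤ,
      (∀ k, 1 ≤ k → k < n → ¬ (p : ℤ) ∣ (P k).eval cr) ∧
      (p : ℤ) ^ r ∣ (P n).eval cr ∧ ¬ (p : ℤ) ^ (r + 1) ∣ (P n).eval cr := by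
  obtain ⟨c₀, h0n, hks⟩ := hex
  obtain ⟨D, hD, hpD⟩ := hdisc
  have hmon : ∀ t, 1 ≤ t → (P t).Monic :=
    fun t ht => (aux_monic d hd P hP0 hPs t ht).1
  obtain ⟨A, B, hGA, hGmon, heval⟩ := aux_factor d n p hd hn hp P hP0 hPs hmon G hG
  -- primitivity propagates along c ≡ c₀ mod p
  have hprop : ∀ c : ℤ, (p:ℤ) ∣ (c - c₀) →
      ∀ k, 1 ≤ k → k < n → ¬ (p : ℤ) ∣ (P k).eval c := by
    intro c hc k h1 h2 hdvd
    apply hks k h1 h2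
    have hsub : (p:ℤ) ∣ ((P k).eval c - (P k).eval c₀) :=
      hc.trans (Polynomial.sub_dvd_eval_sub c c₀ _)
    have := dvd_sub hdvd hsub
    simpa using this
  -- valuation transfer between G and P n
  have htrans : ∀ c : ℤ, (p:ℤ) ∣ (c - c₀) →
      ∀ j : ℕ, ((p:ℤ)^j ∣ G.eval c ↔ (p:ℤ)^j ∣ (P n).eval c) := by
    intro c hc j
    obtain ⟨hA, hB⟩ := heval c (hprop c hc)
    have hev : G.eval c * A.eval c = (P n).eval c * B.eval c := by
      rw [← Polynomial.eval_mul, ← Polynomial.eval_mul, hGA]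
    constructor
    · intro h
      have h2 : (p:ℤ)^j ∣ (P n).eval c * B.eval c := by
        rw [← hev]; exact Dvd.dvd.mul_right h _
      have hcop : IsCoprime ((p:ℤ)^j) (B.eval c) := (aux_coprime p hp _ hB).pow_left
      exact hcop.dvd_of_dvd_mul_left (by rwa [mul_comm] at h2)
    · intro h
      have h2 : (p:ℤ)^j ∣ G.eval c * A.eval c := by
        rw [hev]; exact Dvd.dvd.mul_right h _
      have hcop : IsCoprime ((p:ℤ)^j) (A.eval c) := (aux_coprime p hp _ hA).pow_left
      exact hcop.dvd_of_dvd_mul_left (by rwa [mul_comm] at h2)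
  have hc₀self : (p:ℤ) ∣ (c₀ - c₀) := by simp
  -- p divides G(c₀)
  have hG0 : (p:ℤ) ∣ G.eval c₀ := by
    have := (htrans c₀ hc₀self 1).mpr (by simpa using h0n)
    simpa using this
  -- p does not divide G'(c₀)
  have hG1 : ¬ (p:ℤ) ∣ (Polynomial.derivative G).eval c₀ := by
    intro h
    exact hpD (aux_disc p hp G hGmon c₀ hG0 h D hD)
  obtain ⟨c, hc, hcr, hcr1⟩ := aux_hensel p hp G c₀ r hr hG0 hG1
  refine ⟨c, hprop c hc, ?_, ?_⟩
  · exact (htrans c hc r).mp hcr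
  · intro h
    exact hcr1 ((htrans c hc (r+1)).mpr h)
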